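/- arXiv:1902.00871 — 3 statements merged into one kernel-verified Lean document; each statement's English description precedes it below -/
import Mathlib

section
/- If u and v are distinct vertices of Γ with st(u) = st(v), then both u and v are principal vertices. -/
namespace GW

variable {V : Type*}

/-- `V^±`: the set of generators and their inverses, identified with `V × Bool`;
`(v, true)` is the generator `v` and `(v, false)` is `v⁻¹`. -/
abbrev Vpm (V : Type*) := V × Bool

/-- The inverse of an element of `V^±`. -/
def pinv (x : Vpm V) : Vpm V := (x.1, !x.2)

/-- The link of a vertex: the set of vertices adjacent to it. -/
def lk (Γ : SimpleGraph V) (v : V) : Set V := {w | Γ.Adj v w}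

/-- The star of a vertex: its link together with the vertex itself. -/
def st (Γ : SimpleGraph V) (v : V) : Set V := lk Γ v ∪ {v}

/-- A vertex is principal if no vertex has strictly larger link. -/
def Principal (Γ : SimpleGraph V) (v : V) : Prop := ¬ ∃ w : V, lk Γ v ⊂ lk Γ w

/-- The relation `u ∼ w`: `lk(u) ⊆ st(w)` and `lk(w) ⊆ st(u)`. -/
def Eqv (Γ : SimpleGraph V) (u w : V) : Prop :=
  lk Γ u ⊆ st Γ w ∧ lk Γ w ⊆ st Γ u

/-- For `S ⊆ V`, the set `S^± ⊆ V^±` of elements with underlying vertex in `S`. -/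
def pm (S : Set V) : Set (Vpm V) := {x | x.1 ∈ S}

/-- `u` and `w` lie in the same connected component of `Γ − lk(m)`
(the induced subgraph on the complement of the link of `m`). -/
def SameComp (Γ : SimpleGraph V) (m u w : V) : Prop :=
  ∃ (hu : u ∈ (lk Γ m)ᶜ) (hw : w ∈ (lk Γ m)ᶜ),
    (Γ.induce ((lk Γ m)ᶜ : Set V)).Reachable ⟨u, hu⟩ ⟨w, hw⟩

/-- The vertex set of the connected component of `u` in `Γ − lk(m)`. -/
def comp (Γ : SimpleGraph V) (m u : V) : Set V := {w | SameComp Γ m u w}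

/-- `U ⊆ V^±` is `m`-inseparable if `U = {u}` or `U = {u⁻¹}` for a vertex `u` whose
component in `Γ − lk(m)` is the single vertex `u`, or `U = C^±` for a component `C`
of `Γ − lk(m)` with more than one vertex. -/
def Inseparable (Γ : SimpleGraph V) (m : Vpm V) (U : Set (Vpm V)) : Prop :=
  (∃ u : V, comp Γ m.1 u = {u} ∧ (U = {(u, true)} ∨ U = {(u, false)})) ∨
  (∃ u : V, u ∈ (lk Γ m.1)ᶜ ∧ comp Γ m.1 u ≠ {u} ∧ U = pm (comp Γ m.1 u))

/-- A `ΓW`-subset based at `m`: a union of `m`-inseparable subsets containing `m`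
but not `m⁻¹`. -/
def GWSubset (Γ : SimpleGraph V) (m : Vpm V) (P : Set (Vpm V)) : Prop :=
  m ∈ P ∧ pinv m ∉ P ∧ ∀ x ∈ P, ∃ U : Set (Vpm V), Inseparable Γ m U ∧ x ∈ U ∧ U ⊆ P

/-- `P* = V^± ∖ lk(m)^± ∖ P`. -/
def pstar (Γ : SimpleGraph V) (m : Vpm V) (P : Set (Vpm V)) : Set (Vpm V) :=
  (pm (lk Γ m.1))ᶜ \ P

/-- A `ΓW`-partition `{P | P* | lk(m)^±}` based at `m`, recorded together with its
base `m` and the side `P` containing `m`; both sides are `ΓW`-subsets with at least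
two elements. -/
structure GWPartition (Γ : SimpleGraph V) where
  base : Vpm V
  P : Set (Vpm V)
  hP : GWSubset Γ base P
  hPstar : GWSubset Γ (pinv base) (pstar Γ base P)
  thickP : 2 ≤ P.ncard
  thickPstar : 2 ≤ (pstar Γ base P).ncard

/-- The side `P*` of a `ΓW`-partition. -/
def GWPartition.Pstar {Γ : SimpleGraph V} (Pa : GWPartition Γ) : Set (Vpm V) :=
  pstar Γ Pa.base Pa.P

/-- The (unordered) pair of sides of a `ΓW`-partition; two `ΓW`-partitions are equal
as partitions exactly when they have the same sides. -/
def sidesOf {Γ : SimpleGraph V} (Pa : GWPartition Γ) : Set (Set (Vpm V)) :=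
  {Pa.P, Pa.Pstar}

/-- A `ΓW`-partition splits a vertex `v` if `v` and `v⁻¹` lie in different sides. -/
def Splits {Γ : SimpleGraph V} (Pa : GWPartition Γ) (v : V) : Prop :=
  ((v, true) ∈ Pa.P ∧ (v, false) ∈ Pa.Pstar) ∨
  ((v, false) ∈ Pa.P ∧ (v, true) ∈ Pa.Pstar)

/-- Compatibility of `ΓW`-partitions: some pair of sides is disjoint, or the
underlying vertices of the bases are adjacent with different stars. -/
def Compatible {Γ : SimpleGraph V} (Pa Qa : GWPartition Γ) : Prop :=
  (Pa.P ∩ Qa.P = ∅ ∨ Pa.P ∩ Qa.Pstar = ∅ ∨ Pa.Pstar ∩ Qa.P = ∅ ∨ Pa.Pstar ∩ Qa.Pstar = ∅) ∨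
  (Γ.Adj Pa.base.1 Qa.base.1 ∧ st Γ Pa.base.1 ≠ st Γ Qa.base.1)

/-- Weak compatibility: some pair of sides is disjoint, or the underlying vertices of
the bases are adjacent (hence distinct). -/
def WeakCompatible {Γ : SimpleGraph V} (Pa Qa : GWPartition Γ) : Prop :=
  (Pa.P ∩ Qa.P = ∅ ∨ Pa.P ∩ Qa.Pstar = ∅ ∨ Pa.Pstar ∩ Qa.P = ∅ ∨ Pa.Pstar ∩ Qa.Pstar = ∅) ∨
  Γ.Adj Pa.base.1 Qa.base.1

/-- A `ΓW`-partition is based at the vertex `u` if it is based at `u` or `u⁻¹`, i.e.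
`lk(u)` equals the link of the recorded base and the partition separates `u` from
`u⁻¹`. -/
def BasedAtVtx {Γ : SimpleGraph V} (Pa : GWPartition Γ) (u : V) : Prop :=
  lk Γ u = lk Γ Pa.base.1 ∧ Splits Pa u

/-- `M(U)`: the largest size of a collection of pairwise distinct, pairwise compatible
`ΓW`-partitions, each based at some element of `U`. -/
noncomputable def M (Γ : SimpleGraph V) (U : Set V) : ℕ :=
  sSup {k : ℕ | ∃ C : Finset (GWPartition Γ), C.card = k ∧
    (∀ Pa ∈ C, Pa.base.1 ∈ U) ∧
    (∀ Pa ∈ C, ∀ Qa ∈ C, Pa ≠ Qa → sidesOf Pa ≠ sidesOf Qa ∧ Compatible Pa Qa)}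

/-- `μ(U)`: the largest size of a collection of pairwise distinct, pairwise weakly
compatible `ΓW`-partitions, each based at some element of `U`. -/
noncomputable def Mweak (Γ : SimpleGraph V) (U : Set V) : ℕ :=
  sSup {k : ℕ | ∃ C : Finset (GWPartition Γ), C.card = k ∧
    (∀ Pa ∈ C, Pa.base.1 ∈ U) ∧
    (∀ Pa ∈ C, ∀ Qa ∈ C, Pa ≠ Qa → sidesOf Pa ≠ sidesOf Qa ∧ WeakCompatible Pa Qa)}

/-- The commutation relations defining the right-angled Artin group `A_Γ`. -/
def Rels (Γ : SimpleGraph V) : Set (FreeGroup V) :=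
  {r | ∃ u w : V, Γ.Adj u w ∧
    r = FreeGroup.of u * FreeGroup.of w * (FreeGroup.of u)⁻¹ * (FreeGroup.of w)⁻¹}

/-- The right-angled Artin group `A_Γ`. -/
abbrev RAAG (Γ : SimpleGraph V) := PresentedGroup (Rels Γ)

/-- The generator of `A_Γ` corresponding to a vertex. -/
def ofv (Γ : SimpleGraph V) (v : V) : RAAG Γ := PresentedGroup.of v

/-- The element of `A_Γ` corresponding to an element of `V^±`. -/
def gen (Γ : SimpleGraph V) (x : Vpm V) : RAAG Γ :=
  if x.2 then ofv Γ x.1 else (ofv Γ x.1)⁻¹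

open scoped Classical in
/-- The image of the generator `v` under the Whitehead automorphism `φ(P, m)`. -/
noncomputable def whImage (Γ : SimpleGraph V) (P : Set (Vpm V)) (m : Vpm V) (v : V) :
    RAAG Γ :=
  if (v, true) ∈ P ∧ (v, false) ∈ P then gen Γ m * ofv Γ v * (gen Γ m)⁻¹
  else if v ≠ m.1 ∧ (v, true) ∈ P ∧ (v, false) ∈ pstar Γ m P then ofv Γ v * (gen Γ m)⁻¹
  else if v ≠ m.1 ∧ (v, false) ∈ P ∧ (v, true) ∈ pstar Γ m P then gen Γ m * ofv Γ v
  else ofv Γ v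

/-- `φ` is the Whitehead automorphism `φ(P, m)`: it sends each generator `v` to
`mvm⁻¹` if `v, v⁻¹ ∈ P`; to `vm⁻¹` if `v ∈ P`, `v⁻¹ ∈ P*`, `v ≠ m^{±1}`; to `mv` if
`v⁻¹ ∈ P`, `v ∈ P*`, `v ≠ m^{±1}`; and to `v` otherwise. -/
def IsWhitehead (Γ : SimpleGraph V) (P : Set (Vpm V)) (m : Vpm V)
    (φ : MulAut (RAAG Γ)) : Prop :=
  ∀ v : V, φ (ofv Γ v) = whImage Γ P m v

/-- An automorphism is inner if it is conjugation by some group element. -/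
def IsInner {G : Type*} [Group G] (φ : MulAut G) : Prop :=
  ∃ g : G, ∀ x, φ x = g * x * g⁻¹

/-- Two automorphisms commute as outer automorphisms iff their commutator is inner. -/
def CommuteOuter {G : Type*} [Group G] (φ ψ : MulAut G) : Prop :=
  IsInner (φ * ψ * φ⁻¹ * ψ⁻¹)

/-- The subgroup of inner automorphisms. -/
def Inn (G : Type*) [Group G] : Subgroup (MulAut G) := (MulAut.conj : G →* MulAut G).range

instance innNormal (G : Type*) [Group G] : (Inn G).Normal := by
  constructor
  intro n hn φ
  obtain ⟨g, rfl⟩ := hn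
  refine ⟨φ g, ?_⟩
  ext x
  simp [MulAut.conj, mul_assoc]

/-- The outer automorphism group `Out(G) = Aut(G)/Inn(G)`. -/
abbrev Out (G : Type*) [Group G] := MulAut G ⧸ Inn G

/-- The projection `Aut(G) → Out(G)`. -/
def toOut (G : Type*) [Group G] : MulAut G →* Out G := QuotientGroup.mk' (Inn G)


/-- If `u` and `v` are distinct vertices of `Γ` with `st(u) = st(v)`, then both `u`
and `v` are principal vertices. -/
theorem stmt0 {V : Type*} [Fintype V] (Γ : SimpleGraph V) (u v : V)
    (huv : u ≠ v) (hst : st Γ u = st Γ v) :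
    Principal Γ u ∧ Principal Γ v := by
  have key : ∀ a b : V, a ≠ b → st Γ a = st Γ b → Principal Γ a := by
    intro a b hab hstab
    have hadj : Γ.Adj a b := by
      have : a ∈ st Γ b := by rw [← hstab]; exact Or.inr rfl
      rcases this with h | h
      · exact h.symm
      · exact absurd h hab
    rintro ⟨w, hsub, hne⟩
    have hwa : w ≠ a := by rintro rfl; exact hne rfl.subset
    have hwb : Γ.Adj w b := hsub hadj
    have hwb' : w ≠ b := by
      rintro rfl
      exact hwb.ne rfl
    -- w ∈ lk Γ b ⊆ st Γ a = st Γ b... use w ∈ lk Γ b, so w ∈ st Γ b = st Γ a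
    have : w ∈ st Γ a := by
      rw [hstab]; exact Or.inl hwb.symm
    rcases this with h | h
    · -- a adj w, so w ∈ lk Γ a ⊆ lk Γ w, so w adj w
      exact (hsub h).ne rfl
    · exact hwa h
  exact ⟨key u v huv hst, key v u huv.symm hst.symm⟩

end GW
end

section
/- Let φ(P,m) and φ(Q,n) be Γ-Whitehead automorphisms with associated ΓW-partitions 𝒫 = {P | P* | lk(m)^±} based at m and 𝒬 = {Q | Q* | lk(n)^±} based at n. If the generators m and n commute in A_Γ (i.e. their underlying vertices are equal or adjacent), then φ(P,m) and φ(Q,n) commute as automorphisms. If m and n do not commute, then the images of φ(P,m) and φ(Q,n) in Out(A_Γ) commute if and only if 𝒫 and 𝒬 are compatible, 𝒬 does not split the underlying vertex of m, and 𝒫 does not split the underlying vertex of n. -/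
namespace GW

variable {V : Type*}

/-!
Replacing a `ΓW`-partition `{P | P* | lk(m)^±}` by its flip `{P* | P | lk(m)^±}`, based at
`m⁻¹`, composes `φ(P, m)` with the inner automorphism `c_{m⁻¹}`, and changes neither which
vertices are split nor compatibility. Up to flips, a compatible pair with no split bases is
one with `P ∩ Q = ∅`, `n^± ⊆ P*` and `m^± ⊆ Q*`; there every generator is moved on each
side by at most one of `φ`, `ψ`, and they commute.

Conversely, suppose `φψ = c_g ψφ` with `m`, `n` not commuting. Sending `m`, `n` and a
suitable third generator `x` (a second element of `P`, or an element of `P ∩ Q`) to the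
Coxeter generators `(2 3)`, `(1 2)`, `(0 1)` of `S₄` and every other generator to `1` is a
homomorphism, as `m`, `n`, `x` are pairwise non-adjacent. Evaluating `φψ = c_g ψφ` at `m`,
`n`, `x` gives conjugacy equations in `S₄`, and a finite check shows them unsolvable in
each configuration where `Q` splits `m` or, after flips, `P ∩ Q ≠ ∅`.
-/

section Signs

@[simp] theorem pinv_fst (x : Vpm V) : (pinv x).1 = x.1 := rfl

@[simp] theorem pinv_pinv (x : Vpm V) : pinv (pinv x) = x := by
  simp [pinv]

theorem eq_or_eq_pinv_of_fst_eq {x y : Vpm V} (h : x.1 = y.1) : x = y ∨ x = pinv y := by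
  obtain ⟨v, b⟩ := x
  obtain ⟨w, c⟩ := y
  obtain rfl : v = w := h
  cases b <;> cases c <;> simp [pinv]

theorem fst_ne_of_mem_of_notMem {S : Set (Vpm V)} {x y : Vpm V} (hx : x ∈ S) (hy : y ∉ S)
    (hy' : pinv y ∉ S) : x.1 ≠ y.1 := by
  intro h
  rcases eq_or_eq_pinv_of_fst_eq h with rfl | rfl <;> contradiction

theorem mem_lk {Γ : SimpleGraph V} {v w : V} : w ∈ lk Γ v ↔ Γ.Adj v w := Iff.rfl

theorem notMem_lk_of_not_adj {Γ : SimpleGraph V} {v w : V} (h : ¬ Γ.Adj v w) : v ∉ lk Γ w :=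
  fun h' => h (mem_lk.mp h').symm

@[simp] theorem mem_pstar {Γ : SimpleGraph V} {m x : Vpm V} {P : Set (Vpm V)} :
    x ∈ pstar Γ m P ↔ x.1 ∉ lk Γ m.1 ∧ x ∉ P := by
  simp [pstar, pm]

end Signs

section Components

variable {Γ : SimpleGraph V} {m : Vpm V}

theorem SameComp.trans {a u w : V} (h₁ : SameComp Γ a u w) {z : V} (h₂ : SameComp Γ a w z) :
    SameComp Γ a u z := by
  obtain ⟨hu, _, r₁⟩ := h₁
  obtain ⟨_, hz, r₂⟩ := h₂
  exact ⟨hu, hz, r₁.trans r₂⟩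

theorem Inseparable.fst_notMem_lk {U : Set (Vpm V)} (hU : Inseparable Γ m U) {x : Vpm V}
    (hx : x ∈ U) : x.1 ∉ lk Γ m.1 := by
  rcases hU with ⟨u, hu, rfl | rfl⟩ | ⟨u, -, -, rfl⟩
  all_goals first
    | obtain rfl := hx
      exact (hu.symm ▸ Set.mem_singleton u : u ∈ comp Γ m.1 u).2.1
    | exact hx.2.1

theorem Inseparable.mem_of_sameComp {U : Set (Vpm V)} (hU : Inseparable Γ m U) {x y : Vpm V}
    (hx : x ∈ U) (hxy : SameComp Γ m.1 x.1 y.1) (hne : y.1 ≠ x.1) : y ∈ U := by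
  rcases hU with ⟨u, hu, rfl | rfl⟩ | ⟨u, -, -, rfl⟩
  · obtain rfl := hx
    exact absurd (hu ▸ hxy : y.1 ∈ ({u} : Set V)) hne
  · obtain rfl := hx
    exact absurd (hu ▸ hxy : y.1 ∈ ({u} : Set V)) hne
  · exact SameComp.trans hx hxy

variable {P : Set (Vpm V)}

theorem GWSubset.fst_notMem_lk (hP : GWSubset Γ m P) {x : Vpm V} (hx : x ∈ P) :
    x.1 ∉ lk Γ m.1 := by
  obtain ⟨U, hU, hxU, -⟩ := hP.2.2 x hx
  exact hU.fst_notMem_lk hxU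

theorem GWSubset.mem_of_adj (hP : GWSubset Γ m P) {x y : Vpm V} (hx : x ∈ P)
    (hadj : Γ.Adj x.1 y.1) (hy : y.1 ∉ lk Γ m.1) : y ∈ P := by
  obtain ⟨U, hU, hxU, hUP⟩ := hP.2.2 x hx
  have hxy : SameComp Γ m.1 x.1 y.1 :=
    ⟨hU.fst_notMem_lk hxU, hy, SimpleGraph.Adj.reachable (by simpa using hadj)⟩
  exact hUP (hU.mem_of_sameComp hxU hxy hadj.ne.symm)

end Components

section RAAG

variable {Γ : SimpleGraph V}

@[simp] theorem gen_mk_true (v : V) : gen Γ (v, true) = ofv Γ v := rfl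

@[simp] theorem gen_mk_false (v : V) : gen Γ (v, false) = (ofv Γ v)⁻¹ := rfl

theorem gen_pinv (x : Vpm V) : gen Γ (pinv x) = (gen Γ x)⁻¹ := by
  obtain ⟨v, b⟩ := x
  cases b <;> simp [pinv]

theorem ofv_commute_of_adj {u w : V} (h : Γ.Adj u w) : Commute (ofv Γ u) (ofv Γ w) := by
  have hrel : PresentedGroup.mk (Rels Γ)
      (FreeGroup.of u * FreeGroup.of w * (FreeGroup.of u)⁻¹ * (FreeGroup.of w)⁻¹) = 1 :=
    (QuotientGroup.eq_one_iff _).mpr (Subgroup.subset_normalClosure ⟨u, w, h, rfl⟩)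
  simp only [map_mul, map_inv] at hrel
  exact commutatorElement_eq_one_iff_commute.mp hrel

theorem gen_commute {x y : Vpm V} (h : x.1 = y.1 ∨ Γ.Adj x.1 y.1) :
    Commute (gen Γ x) (gen Γ y) := by
  have hc : Commute (ofv Γ x.1) (ofv Γ y.1) := by
    rcases h with h | h
    · rw [h]
    · exact ofv_commute_of_adj h
  obtain ⟨v, b⟩ := x
  obtain ⟨w, c⟩ := y
  cases b <;> cases c <;> simpa using hc

theorem mulAut_ext {φ ψ : MulAut (RAAG Γ)} (h : ∀ v, φ (ofv Γ v) = ψ (ofv Γ v)) :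
    φ = ψ :=
  MulEquiv.toMonoidHom_injective (PresentedGroup.ext h)

theorem exists_hom_gen_eq {H : Type*} [Group H] (S : Set (Vpm V)) (t : Vpm V → H)
    (hS : S.Pairwise fun x y => x.1 ≠ y.1 ∧ ¬ Γ.Adj x.1 y.1) :
    ∃ π : RAAG Γ →* H, ∀ x ∈ S, π (gen Γ x) = t x := by
  classical
  let g : Vpm V → H := fun y => if y.2 then t y else (t y)⁻¹
  let f : V → H := fun v => if h : ∃ y ∈ S, y.1 = v then g h.choose else 1
  have hf : ∀ u w, Γ.Adj u w → Commute (f u) (f w) := by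
    intro u w hadj
    by_cases hu : ∃ y ∈ S, y.1 = u
    · by_cases hw : ∃ y ∈ S, y.1 = w
      · refine absurd ?_ (hS hu.choose_spec.1 hw.choose_spec.1 fun h => hadj.ne ?_).2
        · rwa [hu.choose_spec.2, hw.choose_spec.2]
        · rw [← hu.choose_spec.2, ← hw.choose_spec.2, h]
      · rw [show f w = 1 from dif_neg hw]
        exact Commute.one_right _
    · rw [show f u = 1 from dif_neg hu]
      exact Commute.one_left _
  refine ⟨PresentedGroup.toGroup (f := f) ?_, fun x hx => ?_⟩
  · rintro r ⟨u, w, hadj, rfl⟩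
    simpa [commutatorElement_def] using commutatorElement_eq_one_iff_commute.mpr (hf u w hadj)
  · have h : ∃ y ∈ S, y.1 = x.1 := ⟨x, hx, rfl⟩
    have hfx : f x.1 = g x := by
      rw [show f x.1 = g h.choose from dif_pos h]
      by_contra hne
      exact (hS h.choose_spec.1 hx fun e => hne (by rw [e])).1 h.choose_spec.2
    obtain ⟨v, b⟩ := x
    cases b <;> simp [gen, ofv, g] at hfx ⊢ <;> simp [hfx]

end RAAG

section Twist

variable {G H : Type*} [Group G] [Group H]

def twist (A B : G) (k l : ℤ) : G := A ^ k * B * A ^ l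

@[simp] theorem twist_zero_zero (A B : G) : twist A B 0 0 = B := by
  simp [twist]

theorem map_twist {F : Type*} [FunLike F G H] [MonoidHomClass F G H] (f : F) (A B : G)
    (k l : ℤ) :
    f (twist A B k l) = twist (f A) (f B) k l := by
  simp [twist]

theorem twist_inv (A B : G) (k l : ℤ) : (twist A B k l)⁻¹ = twist A B⁻¹ (-l) (-k) := by
  simp [twist, mul_assoc]

end Twist

section Whitehead

variable {Γ : SimpleGraph V} {m : Vpm V} {P : Set (Vpm V)}

open Classical in
noncomputable def whExp (P : Set (Vpm V)) (m x : Vpm V) : ℤ :=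
  if x ∈ P ∧ x.1 ≠ m.1 then 1 else 0

theorem whExp_of_mem {x : Vpm V} (hx : x ∈ P) (h : x.1 ≠ m.1) : whExp P m x = 1 := by
  simp [whExp, hx, h]

theorem whExp_of_notMem {x : Vpm V} (hx : x ∉ P) : whExp P m x = 0 := by
  simp [whExp, hx]

theorem whExp_of_fst_eq {x : Vpm V} (h : x.1 = m.1) : whExp P m x = 0 := by
  simp [whExp, h]

@[simp] theorem whExp_base : whExp P m m = 0 :=
  whExp_of_fst_eq rfl

@[simp] theorem whExp_pinv_base : whExp P m (pinv m) = 0 :=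
  whExp_of_fst_eq rfl

theorem whExp_eq_zero_or_one (P : Set (Vpm V)) (m x : Vpm V) :
    whExp P m x = 0 ∨ whExp P m x = 1 := by
  unfold whExp
  split_ifs <;> simp

theorem whExp_pstar {x : Vpm V} (hl : x.1 ∉ lk Γ m.1) (hm : x.1 ≠ m.1) :
    whExp (pstar Γ m P) (pinv m) x = 1 - whExp P m x := by
  by_cases hx : x ∈ P <;> simp [whExp, hx, hl, hm]

theorem GWSubset.whExp_eq_zero (hP : GWSubset Γ m P) {x : Vpm V}
    (hx : x.1 = m.1 ∨ x.1 ∈ lk Γ m.1) : whExp P m x = 0 := by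
  rcases hx with hx | hx
  exacts [whExp_of_fst_eq hx, whExp_of_notMem fun h => hP.fst_notMem_lk h hx]

theorem GWSubset.whImage_eq (hP : GWSubset Γ m P) (v : V) :
    whImage Γ P m v =
      twist (gen Γ m) (ofv Γ v) (whExp P m (v, false)) (-whExp P m (v, true)) := by
  by_cases hv : v = m.1
  · subst hv
    have hm : ¬ ((m.1, true) ∈ P ∧ (m.1, false) ∈ P) := by
      obtain ⟨w, b⟩ := m
      cases b
      · exact fun h => hP.2.1 (by simpa [pinv] using h.1)
      · exact fun h => hP.2.1 (by simpa [pinv] using h.2)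
    simp [whImage, hm, whExp_of_fst_eq]
  · by_cases h₁ : (v, true) ∈ P <;> by_cases h₂ : (v, false) ∈ P
    · simp [whImage, twist, whExp, h₁, h₂, hv]
    · simp [whImage, twist, whExp, h₁, h₂, hv, hP.fst_notMem_lk h₁]
    · simp [whImage, twist, whExp, h₁, h₂, hv, hP.fst_notMem_lk h₂]
    · simp [whImage, twist, whExp, h₁, h₂]

theorem GWSubset.isWhitehead_iff (hP : GWSubset Γ m P) {φ : MulAut (RAAG Γ)} :
    IsWhitehead Γ P m φ ↔ ∀ x, φ (gen Γ x) =
      twist (gen Γ m) (gen Γ x) (whExp P m (pinv x)) (-whExp P m x) := by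
  refine ⟨fun hφ x => ?_, fun h v => by simpa [hP.whImage_eq, pinv] using h (v, true)⟩
  obtain ⟨v, b⟩ := x
  cases b
  · simp [hφ v, hP.whImage_eq, twist_inv, pinv]
  · simp [hφ v, hP.whImage_eq, pinv]

theorem IsWhitehead.apply_gen {φ : MulAut (RAAG Γ)} (hφ : IsWhitehead Γ P m φ)
    (hP : GWSubset Γ m P) (x : Vpm V) :
    φ (gen Γ x) = twist (gen Γ m) (gen Γ x) (whExp P m (pinv x)) (-whExp P m x) :=
  hP.isWhitehead_iff.mp hφ x

theorem IsWhitehead.apply_gen_eq_self {φ : MulAut (RAAG Γ)} (hφ : IsWhitehead Γ P m φ)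
    (hP : GWSubset Γ m P) {x : Vpm V} (h : whExp P m x = 0) (h' : whExp P m (pinv x) = 0) :
    φ (gen Γ x) = gen Γ x := by
  simp [hφ.apply_gen hP, h, h']

end Whitehead

section Outer

variable {G H : Type*} [Group G] [Group H] {φ ψ : MulAut G}

theorem isInner_iff_mem_inn {θ : MulAut G} : IsInner θ ↔ θ ∈ Inn G := by
  constructor
  · rintro ⟨g, hg⟩
    exact ⟨g, MulEquiv.ext fun x => (hg x).symm⟩
  · rintro ⟨g, rfl⟩
    exact ⟨g, fun x => rfl⟩

theorem commuteOuter_iff_commute : CommuteOuter φ ψ ↔ Commute (toOut G φ) (toOut G ψ) := by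
  rw [← commutatorElement_eq_one_iff_commute, commutatorElement_def, ← map_inv, ← map_inv,
    ← map_mul, ← map_mul, ← map_mul, toOut, QuotientGroup.mk'_apply, QuotientGroup.eq_one_iff,
    ← isInner_iff_mem_inn, CommuteOuter]

theorem CommuteOuter.symm (h : CommuteOuter φ ψ) : CommuteOuter ψ φ :=
  commuteOuter_iff_commute.mpr (commuteOuter_iff_commute.mp h).symm

theorem commuteOuter_of_commute (h : Commute φ ψ) : CommuteOuter φ ψ :=
  commuteOuter_iff_commute.mpr (h.map (toOut G))

theorem toOut_conj_mul (g : G) (φ : MulAut G) : toOut G (MulAut.conj g * φ) = toOut G φ := by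
  have hg : MulAut.conj g ∈ Inn G := MonoidHom.mem_range.mpr ⟨g, rfl⟩
  rw [map_mul, toOut, QuotientGroup.mk'_apply, (QuotientGroup.eq_one_iff _).mpr hg, one_mul]

theorem commuteOuter_conj_mul_left (g : G) :
    CommuteOuter (MulAut.conj g * φ) ψ ↔ CommuteOuter φ ψ := by
  simp only [commuteOuter_iff_commute, toOut_conj_mul]

theorem commuteOuter_conj_mul_right (g : G) :
    CommuteOuter φ (MulAut.conj g * ψ) ↔ CommuteOuter φ ψ := by
  simp only [commuteOuter_iff_commute, toOut_conj_mul]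

/-- `h` conjugates `ψφ(X)` to `φψ(X)`, for `φ`, `ψ` acting on `M`, `N`, `X` by
`N ↦ twist M N r s`, `X ↦ twist M X c d` and `M ↦ twist N M p q`, `X ↦ twist N X a b`. -/
def TwistRel (h M N X : G) (r s p q c d a b : ℤ) : Prop :=
  twist (twist M N r s) (twist M X c d) a b = h * twist (twist N M p q) (twist N X a b) c d * h⁻¹

instance [DecidableEq G] (h M N X : G) (r s p q c d a b : ℤ) :
    Decidable (TwistRel h M N X r s p q c d a b) :=
  inferInstanceAs (Decidable (_ = _))

theorem TwistRel.map {h M N X : G} {r s p q c d a b : ℤ} (f : G →* H)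
    (hrel : TwistRel h M N X r s p q c d a b) :
    TwistRel (f h) (f M) (f N) (f X) r s p q c d a b := by
  simpa [TwistRel, map_twist] using congrArg f hrel

theorem twistRel_of_isInner {g M N X : G} {r s p q c d a b : ℤ}
    (hg : ∀ x, (φ * ψ * φ⁻¹ * ψ⁻¹) x = g * x * g⁻¹)
    (hφN : φ N = twist M N r s) (hψM : ψ M = twist N M p q)
    (hφX : φ X = twist M X c d) (hψX : ψ X = twist N X a b) :
    TwistRel g M N X r s p q c d a b := by
  have h := hg (ψ (φ X))
  simp only [MulAut.mul_apply, MulAut.inv_apply, MulEquiv.symm_apply_apply] at h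
  rw [hψX, map_twist, hφX, map_twist, hφN, hψM, hψX] at h
  exact h

end Outer

namespace GWPartition

variable {Γ : SimpleGraph V} (Pa Qa : GWPartition Γ)

theorem pstar_Pstar : pstar Γ (pinv Pa.base) Pa.Pstar = Pa.P := by
  ext x
  simp only [Pstar, mem_pstar, pinv_fst, not_and, not_not]
  exact ⟨fun h => h.2 h.1, fun h => ⟨Pa.hP.fst_notMem_lk h, fun _ => h⟩⟩

def flip : GWPartition Γ where
  base := pinv Pa.base
  P := Pa.Pstar
  hP := Pa.hPstar
  hPstar := by rw [pinv_pinv, pstar_Pstar]; exact Pa.hP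
  thickP := Pa.thickPstar
  thickPstar := by rw [pstar_Pstar]; exact Pa.thickP

@[simp] theorem flip_base : Pa.flip.base = pinv Pa.base := rfl

@[simp] theorem flip_P : Pa.flip.P = Pa.Pstar := rfl

@[simp] theorem flip_Pstar : Pa.flip.Pstar = Pa.P := Pa.pstar_Pstar

@[simp] theorem splits_flip (v : V) : Splits Pa.flip v ↔ Splits Pa v := by
  simp only [Splits, flip_P, flip_Pstar]
  tauto

variable {Pa Qa}

@[simp] theorem compatible_flip_left : Compatible Pa.flip Qa ↔ Compatible Pa Qa := by
  simp only [Compatible, flip_P, flip_Pstar, flip_base, pinv_fst]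
  tauto

@[simp] theorem compatible_flip_right : Compatible Pa Qa.flip ↔ Compatible Pa Qa := by
  simp only [Compatible, flip_P, flip_Pstar, flip_base, pinv_fst]
  tauto

theorem not_splits_iff {x : Vpm V} (hx : x.1 ∉ lk Γ Pa.base.1) :
    ¬ Splits Pa x.1 ↔ (pinv x ∈ Pa.P ↔ x ∈ Pa.P) := by
  obtain ⟨v, b⟩ := x
  cases b <;> simp only [Splits, Pstar, mem_pstar, pinv] at hx ⊢ <;> simp only [hx] <;> tauto

theorem pinv_notMem_of_not_splits {x : Vpm V} (hx : x.1 ∉ lk Γ Pa.base.1)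
    (hs : ¬ Splits Pa x.1) (h : x ∉ Pa.P) : pinv x ∉ Pa.P :=
  fun h' => h (((not_splits_iff hx).mp hs).mp h')

@[simp] theorem mem_Pstar {x : Vpm V} : x ∈ Pa.Pstar ↔ x.1 ∉ lk Γ Pa.base.1 ∧ x ∉ Pa.P :=
  mem_pstar

theorem fst_ne_of_mem_of_ne {x : Vpm V} (hx : x ∈ Pa.P) (hxm : x ≠ Pa.base) :
    x.1 ≠ Pa.base.1 := by
  intro h
  rcases eq_or_eq_pinv_of_fst_eq h with rfl | rfl
  exacts [hxm rfl, Pa.hP.2.1 hx]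

end GWPartition

open GWPartition in
theorem IsWhitehead.flip {Γ : SimpleGraph V} {Pa : GWPartition Γ} {φ : MulAut (RAAG Γ)}
    (hφ : IsWhitehead Γ Pa.P Pa.base φ) :
    IsWhitehead Γ Pa.flip.P Pa.flip.base (MulAut.conj (gen Γ Pa.base)⁻¹ * φ) := by
  rw [Pa.flip.hP.isWhitehead_iff]
  intro x
  simp only [MulAut.mul_apply, MulAut.conj_apply, hφ.apply_gen Pa.hP, flip_base, flip_P, Pstar,
    gen_pinv, inv_inv]
  by_cases hx : x.1 = Pa.base.1 ∨ x.1 ∈ lk Γ Pa.base.1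
  · have hc : Commute (gen Γ x) (gen Γ Pa.base) :=
      gen_commute (hx.imp id fun h => (mem_lk.mp h).symm)
    rw [Pa.hP.whExp_eq_zero hx, Pa.hP.whExp_eq_zero (x := pinv x) hx,
      Pa.hPstar.whExp_eq_zero hx, Pa.hPstar.whExp_eq_zero (x := pinv x) hx]
    simp [twist, hc.eq, mul_assoc]
  · push Not at hx
    rw [whExp_pstar hx.2 hx.1, whExp_pstar (x := pinv x) hx.2 hx.1]
    simp only [twist]
    group

section Commuting

variable {Γ : SimpleGraph V} {φ ψ : MulAut (RAAG Γ)}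

theorem twist_twist_comm {G : Type*} [Group G] {A B X : G} {a b c d : ℤ}
    (h₁ : Commute (A ^ c) (B ^ a)) (h₂ : Commute (A ^ d) (B ^ b)) :
    twist B (twist A X c d) a b = twist A (twist B X a b) c d := by
  simp only [twist, ← mul_assoc, h₁.eq]
  simp only [mul_assoc, h₂.eq]

theorem mul_comm_of_commute_zpow {m n : Vpm V} {P Q : Set (Vpm V)} (hP : GWSubset Γ m P)
    (hQ : GWSubset Γ n Q) (hφ : IsWhitehead Γ P m φ) (hψ : IsWhitehead Γ Q n ψ)
    (hφn : φ (gen Γ n) = gen Γ n) (hψm : ψ (gen Γ m) = gen Γ m)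
    (hcomm : ∀ x, Commute (gen Γ m ^ whExp P m x) (gen Γ n ^ whExp Q n x)) :
    φ * ψ = ψ * φ := by
  refine mulAut_ext fun v => ?_
  show φ (ψ (gen Γ (v, true))) = ψ (φ (gen Γ (v, true)))
  rw [hψ.apply_gen hQ, map_twist, hφn, hφ.apply_gen hP, map_twist, hψm, hψ.apply_gen hQ]
  refine twist_twist_comm (hcomm _) ?_
  simpa only [zpow_neg] using (hcomm _).inv_inv

theorem mul_comm_of_adj_or_eq {m n : Vpm V} {P Q : Set (Vpm V)} (hP : GWSubset Γ m P)
    (hQ : GWSubset Γ n Q) (hφ : IsWhitehead Γ P m φ) (hψ : IsWhitehead Γ Q n ψ)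
    (h : m.1 = n.1 ∨ Γ.Adj m.1 n.1) : φ * ψ = ψ * φ := by
  have hn : n.1 = m.1 ∨ n.1 ∈ lk Γ m.1 := h.imp Eq.symm id
  have hm : m.1 = n.1 ∨ m.1 ∈ lk Γ n.1 := h.imp id SimpleGraph.Adj.symm
  refine mul_comm_of_commute_zpow hP hQ hφ hψ
    (hφ.apply_gen_eq_self hP (hP.whExp_eq_zero hn) (hP.whExp_eq_zero (x := pinv n) hn))
    (hψ.apply_gen_eq_self hQ (hQ.whExp_eq_zero hm) (hQ.whExp_eq_zero (x := pinv m) hm))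
    fun x => (gen_commute h).zpow_zpow _ _

variable {Pa Qa : GWPartition Γ}

theorem mul_comm_of_inter_eq_empty (hφ : IsWhitehead Γ Pa.P Pa.base φ)
    (hψ : IsWhitehead Γ Qa.P Qa.base ψ) (hnadj : ¬ Γ.Adj Pa.base.1 Qa.base.1)
    (hPQ : Pa.P ∩ Qa.P = ∅) (hm : ¬ Splits Qa Pa.base.1) (hn : ¬ Splits Pa Qa.base.1) :
    φ * ψ = ψ * φ := by
  have hdisj {x : Vpm V} (hx : x ∈ Pa.P) : x ∉ Qa.P := fun hx' =>
    Set.eq_empty_iff_forall_notMem.mp hPQ x ⟨hx, hx'⟩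
  have hnP : Qa.base ∉ Pa.P := fun h => hdisj h Qa.hP.1
  have hmQ : Pa.base ∉ Qa.P := hdisj Pa.hP.1
  have hnP' := Pa.pinv_notMem_of_not_splits hnadj hn hnP
  have hmQ' := Qa.pinv_notMem_of_not_splits (notMem_lk_of_not_adj hnadj) hm hmQ
  refine mul_comm_of_commute_zpow Pa.hP Qa.hP hφ hψ
    (hφ.apply_gen_eq_self Pa.hP (whExp_of_notMem hnP) (whExp_of_notMem hnP'))
    (hψ.apply_gen_eq_self Qa.hP (whExp_of_notMem hmQ) (whExp_of_notMem hmQ')) fun x => ?_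
  by_cases hx : x ∈ Pa.P
  · simp [whExp_of_notMem (hdisj hx)]
  · simp [whExp_of_notMem hx]

theorem commuteOuter_of_compatible (hφ : IsWhitehead Γ Pa.P Pa.base φ)
    (hψ : IsWhitehead Γ Qa.P Qa.base ψ) (hnadj : ¬ Γ.Adj Pa.base.1 Qa.base.1)
    (hc : Compatible Pa Qa) (hm : ¬ Splits Qa Pa.base.1) (hn : ¬ Splits Pa Qa.base.1) :
    CommuteOuter φ ψ := by
  rcases hc with (h | h | h | h) | ⟨hadj, -⟩
  · exact commuteOuter_of_commute (mul_comm_of_inter_eq_empty hφ hψ hnadj h hm hn)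
  · refine (commuteOuter_conj_mul_right (gen Γ Qa.base)⁻¹).mp (commuteOuter_of_commute ?_)
    exact mul_comm_of_inter_eq_empty (Qa := Qa.flip) hφ hψ.flip (by simpa) h (by simpa)
      (by simpa)
  · refine (commuteOuter_conj_mul_left (gen Γ Pa.base)⁻¹).mp (commuteOuter_of_commute ?_)
    exact mul_comm_of_inter_eq_empty (Pa := Pa.flip) hφ.flip hψ (by simpa) h (by simpa)
      (by simpa)
  · refine (commuteOuter_conj_mul_left (gen Γ Pa.base)⁻¹).mp
      ((commuteOuter_conj_mul_right (gen Γ Qa.base)⁻¹).mp (commuteOuter_of_commute ?_))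
    exact mul_comm_of_inter_eq_empty (Pa := Pa.flip) (Qa := Qa.flip) hφ.flip hψ.flip
      (by simpa) h (by simpa) (by simpa)
  · exact absurd hadj hnadj

end Commuting

section Certificates

/- The exponents are those of `φ`, `ψ` at `n`, `m` and `x` in `not_commuteOuter_of_splits`,
`not_commuteOuter_of_notMem` and `inter_eq_empty_of_commuteOuter`, where `m`, `n`, `x` are sent
to `cox 2`, `cox 1`, `cox 0`; `decide` runs through all conjugators in `S₄`. -/

def cox (i : Fin 3) : Equiv.Perm (Fin 4) := Equiv.swap i.castSucc i.succ

theorem not_twistRel_of_splits {h : Equiv.Perm (Fin 4)} {r s : ℤ}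
    (hrs : r = 1 ∧ s = 0 ∨ r = 0 ∧ s = 1) :
    ¬ TwistRel h (cox 2) (cox 1) (cox 2) r (-s) 0 (-1) 0 0 0 (-1) := by
  revert h
  rcases hrs with ⟨rfl, rfl⟩ | ⟨rfl, rfl⟩ <;> decide

theorem not_twistRel_of_mem {h : Equiv.Perm (Fin 4)} {c a b : ℤ} (hc : c = 0 ∨ c = 1)
    (ha : a = 0 ∨ a = 1) (hb : b = 0 ∨ b = 1)
    (hM : TwistRel h (cox 2) (cox 1) (cox 2) 0 0 0 (-1) 0 0 0 (-1))
    (hN : TwistRel h (cox 2) (cox 1) (cox 1) 0 0 0 (-1) 0 0 0 0)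
    (hX : TwistRel h (cox 2) (cox 1) (cox 0) 0 0 0 (-1) c (-1) a (-b)) : False := by
  revert h
  rcases hc with rfl | rfl <;> rcases ha with rfl | rfl <;> rcases hb with rfl | rfl <;> decide

theorem not_twistRel_of_mem_inter {h : Equiv.Perm (Fin 4)} {c a : ℤ} (hc : c = 0 ∨ c = 1)
    (ha : a = 0 ∨ a = 1)
    (hN : TwistRel h (cox 2) (cox 1) (cox 1) 0 0 0 0 0 0 0 0)
    (hX : TwistRel h (cox 2) (cox 1) (cox 0) 0 0 0 0 c (-1) a (-1)) : False := by
  revert h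
  rcases hc with rfl | rfl <;> rcases ha with rfl | rfl <;> decide

end Certificates

section Forward

variable {Γ : SimpleGraph V} {φ ψ : MulAut (RAAG Γ)}

theorem CommuteOuter.exists_twistRel {m n : Vpm V} {P Q : Set (Vpm V)} (hP : GWSubset Γ m P)
    (hQ : GWSubset Γ n Q) (hφ : IsWhitehead Γ P m φ) (hψ : IsWhitehead Γ Q n ψ)
    (hco : CommuteOuter φ ψ) :
    ∃ g, ∀ y, TwistRel g (gen Γ m) (gen Γ n) (gen Γ y) (whExp P m (pinv n)) (-whExp P m n)
      (whExp Q n (pinv m)) (-whExp Q n m) (whExp P m (pinv y)) (-whExp P m y)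
      (whExp Q n (pinv y)) (-whExp Q n y) := by
  obtain ⟨g, hg⟩ := hco
  exact ⟨g, fun y => twistRel_of_isInner hg (hφ.apply_gen hP n) (hψ.apply_gen hQ m)
    (hφ.apply_gen hP y) (hψ.apply_gen hQ y)⟩

theorem exists_hom_cox {m n x : Vpm V} (hmn : m.1 ≠ n.1) (hxm : x.1 ≠ m.1) (hxn : x.1 ≠ n.1)
    (hmn' : ¬ Γ.Adj m.1 n.1) (hmx : ¬ Γ.Adj m.1 x.1) (hnx : ¬ Γ.Adj n.1 x.1) :
    ∃ π : RAAG Γ →* Equiv.Perm (Fin 4),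
      π (gen Γ m) = cox 2 ∧ π (gen Γ n) = cox 1 ∧ π (gen Γ x) = cox 0 := by
  classical
  obtain ⟨π, hπ⟩ := exists_hom_gen_eq (Γ := Γ) {m, n, x}
    (fun y => if y = m then cox 2 else if y = n then cox 1 else cox 0) (by
      simp [Set.pairwise_insert, hmn, hxm, hxn, hmn', hmx, hnx, Ne.symm hmn, Ne.symm hxm,
        Ne.symm hxn, SimpleGraph.adj_comm])
  have hnm : n ≠ m := fun h => hmn (h ▸ rfl)
  have hx : x ≠ m ∧ x ≠ n := ⟨fun h => hxm (h ▸ rfl), fun h => hxn (h ▸ rfl)⟩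
  exact ⟨π, by simpa using hπ m (by simp), by simpa [hnm] using hπ n (by simp),
    by simpa [hx] using hπ x (by simp)⟩

variable {Pa Qa : GWPartition Γ}

theorem not_commuteOuter_of_splits (hφ : IsWhitehead Γ Pa.P Pa.base φ)
    (hψ : IsWhitehead Γ Qa.P Qa.base ψ) (hne : Pa.base.1 ≠ Qa.base.1)
    (hnadj : ¬ Γ.Adj Pa.base.1 Qa.base.1) (hmQ : Pa.base ∈ Qa.P) (hmQ' : pinv Pa.base ∉ Qa.P)
    (hn : Splits Pa Qa.base.1) : ¬ CommuteOuter φ ψ := by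
  classical
  intro hco
  obtain ⟨g, hg⟩ := hco.exists_twistRel Pa.hP Qa.hP hφ hψ
  obtain ⟨π, hπ⟩ := exists_hom_gen_eq (Γ := Γ) {Pa.base, Qa.base}
    (fun y => if y = Pa.base then cox 2 else cox 1)
    (by simp [Set.pairwise_insert, hne, Ne.symm hne, hnadj, SimpleGraph.adj_comm])
  have hπm : π (gen Γ Pa.base) = cox 2 := by simpa using hπ Pa.base (by simp)
  have hnm : Qa.base ≠ Pa.base := fun h => hne (h ▸ rfl)
  have hπn : π (gen Γ Qa.base) = cox 1 := by simpa [hnm] using hπ Qa.base (by simp)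
  have hrs : whExp Pa.P Pa.base (pinv Qa.base) = 1 ∧ whExp Pa.P Pa.base Qa.base = 0 ∨
      whExp Pa.P Pa.base (pinv Qa.base) = 0 ∧ whExp Pa.P Pa.base Qa.base = 1 := by
    have hsplit := mt (Pa.not_splits_iff hnadj).mpr (not_not.mpr hn)
    by_cases h : Qa.base ∈ Pa.P
    · exact Or.inr ⟨whExp_of_notMem (by tauto), whExp_of_mem h (Ne.symm hne)⟩
    · exact Or.inl ⟨whExp_of_mem (by tauto) (Ne.symm hne), whExp_of_notMem h⟩
  refine not_twistRel_of_splits hrs (h := π g) ?_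
  simpa [hπm, hπn, whExp_of_mem hmQ hne, whExp_of_notMem hmQ'] using
    (hg Pa.base).map π

theorem not_commuteOuter_of_notMem (hφ : IsWhitehead Γ Pa.P Pa.base φ)
    (hψ : IsWhitehead Γ Qa.P Qa.base ψ) (hne : Pa.base.1 ≠ Qa.base.1)
    (hnadj : ¬ Γ.Adj Pa.base.1 Qa.base.1) (hmQ : Pa.base ∈ Qa.P) (hmQ' : pinv Pa.base ∉ Qa.P)
    (hn : Qa.base ∉ Pa.P) (hn' : pinv Qa.base ∉ Pa.P) : ¬ CommuteOuter φ ψ := by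
  intro hco
  obtain ⟨x, hxP, hxm⟩ := Set.exists_ne_of_one_lt_ncard Pa.thickP Pa.base
  have hxn : ¬ Γ.Adj Qa.base.1 x.1 := fun h => hn (Pa.hP.mem_of_adj hxP h.symm hnadj)
  obtain ⟨g, hg⟩ := hco.exists_twistRel Pa.hP Qa.hP hφ hψ
  obtain ⟨π, hπm, hπn, hπx⟩ := exists_hom_cox hne (Pa.fst_ne_of_mem_of_ne hxP hxm)
    (fst_ne_of_mem_of_notMem hxP hn hn') hnadj (Pa.hP.fst_notMem_lk hxP) hxn
  refine not_twistRel_of_mem (h := π g) (whExp_eq_zero_or_one Pa.P Pa.base (pinv x))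
    (whExp_eq_zero_or_one Qa.P Qa.base (pinv x)) (whExp_eq_zero_or_one Qa.P Qa.base x) ?_ ?_ ?_
  · simpa [hπm, hπn, whExp_of_mem hmQ hne, whExp_of_notMem hmQ', whExp_of_notMem hn,
      whExp_of_notMem hn'] using (hg Pa.base).map π
  · simpa [hπm, hπn, whExp_of_mem hmQ hne, whExp_of_notMem hmQ', whExp_of_notMem hn,
      whExp_of_notMem hn'] using (hg Qa.base).map π
  · simpa [hπm, hπn, hπx, whExp_of_mem hmQ hne, whExp_of_notMem hmQ', whExp_of_notMem hn,
      whExp_of_notMem hn', whExp_of_mem hxP (Pa.fst_ne_of_mem_of_ne hxP hxm)] using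
      (hg x).map π

theorem inter_eq_empty_of_commuteOuter (hφ : IsWhitehead Γ Pa.P Pa.base φ)
    (hψ : IsWhitehead Γ Qa.P Qa.base ψ) (hne : Pa.base.1 ≠ Qa.base.1)
    (hnadj : ¬ Γ.Adj Pa.base.1 Qa.base.1) (hco : CommuteOuter φ ψ)
    (hm : Pa.base ∉ Qa.P) (hm' : pinv Pa.base ∉ Qa.P)
    (hn : Qa.base ∉ Pa.P) (hn' : pinv Qa.base ∉ Pa.P) : Pa.P ∩ Qa.P = ∅ := by
  refine Set.eq_empty_iff_forall_notMem.mpr fun x ⟨hxP, hxQ⟩ => ?_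
  have hxm := fst_ne_of_mem_of_notMem hxQ hm hm'
  have hxn := fst_ne_of_mem_of_notMem hxP hn hn'
  obtain ⟨g, hg⟩ := hco.exists_twistRel Pa.hP Qa.hP hφ hψ
  obtain ⟨π, hπm, hπn, hπx⟩ := exists_hom_cox hne hxm hxn hnadj (Pa.hP.fst_notMem_lk hxP)
    (Qa.hP.fst_notMem_lk hxQ)
  refine not_twistRel_of_mem_inter (h := π g) (whExp_eq_zero_or_one Pa.P Pa.base (pinv x))
    (whExp_eq_zero_or_one Qa.P Qa.base (pinv x)) ?_ ?_
  · simpa [hπm, hπn, whExp_of_notMem hm, whExp_of_notMem hm', whExp_of_notMem hn,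
      whExp_of_notMem hn'] using (hg Qa.base).map π
  · simpa [hπm, hπn, hπx, whExp_of_notMem hm, whExp_of_notMem hm', whExp_of_notMem hn,
      whExp_of_notMem hn', whExp_of_mem hxP hxm, whExp_of_mem hxQ hxn] using (hg x).map π

theorem not_splits_of_commuteOuter (hφ : IsWhitehead Γ Pa.P Pa.base φ)
    (hψ : IsWhitehead Γ Qa.P Qa.base ψ) (hne : Pa.base.1 ≠ Qa.base.1)
    (hnadj : ¬ Γ.Adj Pa.base.1 Qa.base.1) (hco : CommuteOuter φ ψ) :
    ¬ Splits Qa Pa.base.1 := by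
  intro hm
  wlog hn : Splits Pa Qa.base.1 ∨ (Qa.base ∉ Pa.P ∧ pinv Qa.base ∉ Pa.P) generalizing Pa φ
  · have hn' := (Pa.not_splits_iff hnadj).mp (fun h => hn (Or.inl h))
    refine this (Pa := Pa.flip) hφ.flip (by simpa) (by simpa)
      ((commuteOuter_conj_mul_left _).mpr hco) (by simpa) (Or.inr ?_)
    have hnP : Qa.base ∈ Pa.P := by tauto
    simp [hnP, hn'.mpr hnP]
  wlog hmQ : Pa.base ∈ Qa.P generalizing Qa ψ
  · refine this (Qa := Qa.flip) hψ.flip (by simpa) (by simpa)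
      ((commuteOuter_conj_mul_right _).mpr hco) (by simpa) (by simpa using hn.imp_right And.symm)
      (by simpa [hmQ] using notMem_lk_of_not_adj hnadj)
  have hmQ' : pinv Pa.base ∉ Qa.P := fun h =>
    (Qa.not_splits_iff (notMem_lk_of_not_adj hnadj)).mpr (iff_of_true h hmQ) hm
  rcases hn with hn | ⟨hn, hn'⟩
  · exact not_commuteOuter_of_splits hφ hψ hne hnadj hmQ hmQ' hn hco
  · exact not_commuteOuter_of_notMem hφ hψ hne hnadj hmQ hmQ' hn hn' hco

theorem compatible_of_commuteOuter (hφ : IsWhitehead Γ Pa.P Pa.base φ)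
    (hψ : IsWhitehead Γ Qa.P Qa.base ψ) (hne : Pa.base.1 ≠ Qa.base.1)
    (hnadj : ¬ Γ.Adj Pa.base.1 Qa.base.1) (hco : CommuteOuter φ ψ)
    (hm : ¬ Splits Qa Pa.base.1) (hn : ¬ Splits Pa Qa.base.1) : Compatible Pa Qa := by
  wlog hnP : Qa.base ∉ Pa.P generalizing Pa φ
  · simpa using this (Pa := Pa.flip) hφ.flip (by simpa) (by simpa)
      ((commuteOuter_conj_mul_left _).mpr hco) (by simpa) (by simpa) (by simp [not_not.mp hnP])
  have hnP' := Pa.pinv_notMem_of_not_splits hnadj hn hnP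
  wlog hmQ : Pa.base ∉ Qa.P generalizing Qa ψ
  · simpa using this (Qa := Qa.flip) hψ.flip (by simpa) (by simpa)
      ((commuteOuter_conj_mul_right _).mpr hco) (by simpa) (by simpa) (by simpa using hnP')
      (by simpa using hnP) (by simp [not_not.mp hmQ])
  have hmQ' := Qa.pinv_notMem_of_not_splits (notMem_lk_of_not_adj hnadj) hm hmQ
  exact Or.inl (Or.inl (inter_eq_empty_of_commuteOuter hφ hψ hne hnadj hco hmQ hmQ' hnP hnP'))

end Forward

theorem stmt2_general {V : Type*} (Γ : SimpleGraph V)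
    (Pa Qa : GWPartition Γ) (φ ψ : MulAut (RAAG Γ))
    (hφ : IsWhitehead Γ Pa.P Pa.base φ) (hψ : IsWhitehead Γ Qa.P Qa.base ψ) :
    ((Pa.base.1 = Qa.base.1 ∨ Γ.Adj Pa.base.1 Qa.base.1) → φ * ψ = ψ * φ) ∧
    (¬ (Pa.base.1 = Qa.base.1 ∨ Γ.Adj Pa.base.1 Qa.base.1) →
      (CommuteOuter φ ψ ↔
        (Compatible Pa Qa ∧ ¬ Splits Qa Pa.base.1 ∧ ¬ Splits Pa Qa.base.1))) := by
  refine ⟨mul_comm_of_adj_or_eq Pa.hP Qa.hP hφ hψ, fun hnc => ?_⟩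
  obtain ⟨hne, hnadj⟩ := not_or.mp hnc
  refine ⟨fun hco => ?_,
    fun ⟨hc, hm, hn⟩ => commuteOuter_of_compatible hφ hψ hnadj hc hm hn⟩
  have hm := not_splits_of_commuteOuter hφ hψ hne hnadj hco
  have hn := not_splits_of_commuteOuter hψ hφ (Ne.symm hne) (fun h => hnadj h.symm) hco.symm
  exact ⟨compatible_of_commuteOuter hφ hψ hne hnadj hco hm hn, hm, hn⟩

/-- Let `φ(P,m)` and `φ(Q,n)` be Whitehead automorphisms with associated
`ΓW`-partitions `Pa` based at `m` and `Qa` based at `n`.  If the generators `m` and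
`n` commute in `A_Γ` (their underlying vertices are equal or adjacent), then the
automorphisms commute.  If not, then they commute as outer automorphisms iff `Pa`
and `Qa` are compatible, `Qa` does not split the vertex of `m` and `Pa` does not
split the vertex of `n`. -/
theorem stmt2 {V : Type*} [Fintype V] (Γ : SimpleGraph V)
    (Pa Qa : GWPartition Γ) (φ ψ : MulAut (RAAG Γ))
    (hφ : IsWhitehead Γ Pa.P Pa.base φ) (hψ : IsWhitehead Γ Qa.P Qa.base ψ) :
    ((Pa.base.1 = Qa.base.1 ∨ Γ.Adj Pa.base.1 Qa.base.1) → φ * ψ = ψ * φ) ∧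
    (¬ (Pa.base.1 = Qa.base.1 ∨ Γ.Adj Pa.base.1 Qa.base.1) →
      (CommuteOuter φ ψ ↔
        (Compatible Pa Qa ∧ ¬ Splits Qa Pa.base.1 ∧ ¬ Splits Pa Qa.base.1))) :=
  stmt2_general Γ Pa Qa φ ψ hφ hψ

end GW
end

section
/- Define the m-length of a ΓW-partition based at m ∈ V^± to be the number of m-inseparable subsets contained in the side containing m. If 𝒫 and 𝒬 are distinct ΓW-partitions based at the same m ∈ V^± with equal m-length, then 𝒫 and 𝒬 are incompatible. -/
/-! Both partitions have `m` on the side `P` and `m⁻¹` on the side `P*`, and their bases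
are equal, hence not adjacent. So compatibility can only mean `P ∩ Q* = ∅` or `P* ∩ Q = ∅`,
i.e. `P ⊆ Q` or `Q ⊆ P`. A side is the union of the `m`-inseparable sets it contains, so
if the smaller side contains as many of them as the larger one, the two sides coincide. -/

namespace GW

variable {V : Type*}

/-- The `m`-length of a `ΓW`-partition based at `m`: the number of `m`-inseparable
subsets contained in the side containing `m`. -/
noncomputable def mLength {V : Type*} {Γ : SimpleGraph V} (Pa : GWPartition Γ) : ℕ :=
  Set.ncard {U : Set (Vpm V) | Inseparable Γ Pa.base U ∧ U ⊆ Pa.P}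

theorem Inseparable.subset_compl_pm_lk {Γ : SimpleGraph V} {m : Vpm V} {U : Set (Vpm V)}
    (h : Inseparable Γ m U) : U ⊆ (pm (lk Γ m.1))ᶜ := by
  rcases h with ⟨u, hcomp, hU⟩ | ⟨u, -, -, rfl⟩
  · have hu : u ∈ comp Γ m.1 u := hcomp ▸ rfl
    rcases hU with rfl | rfl <;> rintro x rfl <;> exact hu.1
  · rintro x ⟨-, hx, -⟩
    exact hx

theorem GWSubset.subset_compl_pm_lk {Γ : SimpleGraph V} {m : Vpm V} {P : Set (Vpm V)}
    (h : GWSubset Γ m P) : P ⊆ (pm (lk Γ m.1))ᶜ := fun x hx => by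
  obtain ⟨U, hU, hxU, -⟩ := h.2.2 x hx
  exact hU.subset_compl_pm_lk hxU

theorem GWSubset.eq_of_subset_of_ncard_le {Γ : SimpleGraph V} {m : Vpm V}
    {P Q : Set (Vpm V)} (hQ : GWSubset Γ m Q) (hQfin : Q.Finite) (hPQ : P ⊆ Q)
    (hcard : {U | Inseparable Γ m U ∧ U ⊆ Q}.ncard ≤ {U | Inseparable Γ m U ∧ U ⊆ P}.ncard) :
    P = Q := by
  have hfin : {U | Inseparable Γ m U ∧ U ⊆ Q}.Finite :=
    hQfin.powerset.subset fun U hU => hU.2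
  have hinsep : {U | Inseparable Γ m U ∧ U ⊆ P} = {U | Inseparable Γ m U ∧ U ⊆ Q} :=
    Set.eq_of_subset_of_ncard_le (fun U hU => ⟨hU.1, hU.2.trans hPQ⟩) hcard hfin
  refine hPQ.antisymm fun x hx => ?_
  obtain ⟨U, hU, hxU, hUQ⟩ := hQ.2.2 x hx
  have hUP : U ∈ {U | Inseparable Γ m U ∧ U ⊆ P} := hinsep ▸ ⟨hU, hUQ⟩
  exact hUP.2 hxU

namespace GWPartition

variable {Γ : SimpleGraph V}

theorem finite_P (Pa : GWPartition Γ) : Pa.P.Finite :=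
  Set.finite_of_ncard_pos (lt_of_lt_of_le two_pos Pa.thickP)

theorem sidesOf_eq_of_P_eq {Pa Qa : GWPartition Γ} (hbase : Pa.base = Qa.base)
    (hP : Pa.P = Qa.P) : sidesOf Pa = sidesOf Qa := by
  simp only [sidesOf, Pstar, pstar, hbase, hP]

theorem P_subset_of_inter_Pstar_eq_empty {Pa Qa : GWPartition Γ} (hbase : Pa.base = Qa.base)
    (h : Pa.P ∩ Qa.Pstar = ∅) : Pa.P ⊆ Qa.P := fun x hx => by
  by_contra hxQ
  have hxQstar : x ∈ Qa.Pstar := ⟨hbase ▸ Pa.hP.subset_compl_pm_lk hx, hxQ⟩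
  exact h.subset ⟨hx, hxQstar⟩

theorem sidesOf_eq_of_inter_Pstar_eq_empty {Pa Qa : GWPartition Γ}
    (hbase : Pa.base = Qa.base) (hlen : mLength Pa = mLength Qa)
    (h : Pa.P ∩ Qa.Pstar = ∅) : sidesOf Pa = sidesOf Qa := by
  refine sidesOf_eq_of_P_eq hbase (Qa.hP.eq_of_subset_of_ncard_le Qa.finite_P
    (P_subset_of_inter_Pstar_eq_empty hbase h) ?_)
  simp only [mLength, hbase] at hlen
  exact hlen.ge

end GWPartition

open GWPartition in
theorem stmt4_general {V : Type*} (Γ : SimpleGraph V) (m : Vpm V)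
    (Pa Qa : GWPartition Γ) (hPa : Pa.base = m) (hQa : Qa.base = m)
    (hne : sidesOf Pa ≠ sidesOf Qa) (hlen : mLength Pa = mLength Qa) :
    ¬ Compatible Pa Qa := by
  have hbase : Pa.base = Qa.base := hPa.trans hQa.symm
  rintro ((h | h | h | h) | ⟨hadj, -⟩)
  · exact h.subset ⟨Pa.hP.1, hbase ▸ Qa.hP.1⟩
  · exact hne (sidesOf_eq_of_inter_Pstar_eq_empty hbase hlen h)
  · exact hne (sidesOf_eq_of_inter_Pstar_eq_empty hbase.symm hlen.symm
      (Set.inter_comm _ _ ▸ h)).symm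
  · exact h.subset ⟨Pa.hPstar.1, hbase ▸ Qa.hPstar.1⟩
  · exact Γ.ne_of_adj hadj (congrArg Prod.fst hbase)

/-- Distinct `ΓW`-partitions based at the same `m ∈ V^±` with equal `m`-length are
incompatible. -/
theorem stmt4 {V : Type*} [Fintype V] (Γ : SimpleGraph V) (m : Vpm V)
    (Pa Qa : GWPartition Γ) (hPa : Pa.base = m) (hQa : Qa.base = m)
    (hne : sidesOf Pa ≠ sidesOf Qa) (hlen : mLength Pa = mLength Qa) :
    ¬ Compatible Pa Qa :=
  stmt4_general Γ m Pa Qa hPa hQa hne hlen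

end GW
end
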